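/- Let α, β ∈ ℂ and let c : ℝ² → ℝ be the real cubic form given in the complex coordinate z = x + iy by c(z) = (1/6)·Re(αz³ + 3βz²z̄). Then c has a repeated root, i.e. there exists z ∈ ℂ with z ≠ 0 such that (∂c/∂x)(z) = 0 and (∂c/∂y)(z) = 0, if and only if there exists θ ∈ ℝ with 3β = −2α e^{2iθ} + ᾱ e^{−4iθ}. (This is the condition for the umbilic with cubic part c not to be of type D₄.) -/

import Mathlib

/-- Partial derivative in the `x`-direction. -/
noncomputable def pdx (f : ℝ × ℝ → ℝ) : ℝ × ℝ → ℝ :=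
  fun p => fderiv ℝ f p (1, 0)

/-- Partial derivative in the `y`-direction. -/
noncomputable def pdy (f : ℝ × ℝ → ℝ) : ℝ × ℝ → ℝ :=
  fun p => fderiv ℝ f p (0, 1)

/-- The real cubic form `c(z) = (1/6)·Re(αz³ + 3βz²z̄)` in real coordinates `z = x + iy`. -/
noncomputable def cubicFormR (α β : ℂ) (p : ℝ × ℝ) : ℝ :=
  (1 / 6 : ℝ) * (α * ((p.1 : ℂ) + (p.2 : ℂ) * Complex.I) ^ 3 +
    3 * β * ((p.1 : ℂ) + (p.2 : ℂ) * Complex.I) ^ 2 *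
      (starRingEnd ℂ ((p.1 : ℂ) + (p.2 : ℂ) * Complex.I))).re

open Complex

/-- The `ℝ`-linear inclusion `(x, y) ↦ x + y i`. -/
noncomputable def Lg : ℝ × ℝ →L[ℝ] ℂ :=
  Complex.ofRealCLM.comp (.fst ℝ ℝ ℝ) + Complex.I • Complex.ofRealCLM.comp (.snd ℝ ℝ ℝ)

lemma Lg_apply (v : ℝ × ℝ) : Lg v = (v.1 : ℂ) + (v.2 : ℂ) * Complex.I := by
  simp [Lg]; ring

lemma hasFDerivAt_g (p : ℝ × ℝ) :
    HasFDerivAt (fun p : ℝ × ℝ => (p.1 : ℂ) + (p.2 : ℂ) * Complex.I) Lg p := by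
  have h1 : HasFDerivAt (fun p : ℝ × ℝ => ((p.1 : ℂ)))
      (Complex.ofRealCLM.comp (.fst ℝ ℝ ℝ)) p :=
    Complex.ofRealCLM.hasFDerivAt.comp p hasFDerivAt_fst
  have h2 : HasFDerivAt (fun p : ℝ × ℝ => ((p.2 : ℂ)))
      (Complex.ofRealCLM.comp (.snd ℝ ℝ ℝ)) p :=
    Complex.ofRealCLM.hasFDerivAt.comp p hasFDerivAt_snd
  have h3 := h2.mul_const Complex.I
  have := h1.add h3
  exact this

set_option maxHeartbeats 1000000 in
lemma pd_cubic (α β : ℂ) (p : ℝ × ℝ) (v : ℝ × ℝ) :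
    fderiv ℝ (cubicFormR α β) p v =
      (1 / 6 : ℝ) * (α * (3 * ((p.1 : ℂ) + (p.2 : ℂ) * Complex.I) ^ 2 * Lg v) +
        3 * β * (((p.1 : ℂ) + (p.2 : ℂ) * Complex.I) ^ 2 * (starRingEnd ℂ (Lg v)) +
          2 * ((p.1 : ℂ) + (p.2 : ℂ) * Complex.I) *
            (starRingEnd ℂ ((p.1 : ℂ) + (p.2 : ℂ) * Complex.I)) * Lg v)).re := by
  set g : ℝ × ℝ → ℂ := fun p => (p.1 : ℂ) + (p.2 : ℂ) * Complex.I with hgdef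
  set w : ℂ := g p with hw
  have hg := hasFDerivAt_g p
  have hconj : HasFDerivAt (fun p => starRingEnd ℂ (g p))
      ((Complex.conjCLE : ℂ ≃L[ℝ] ℂ).toContinuousLinearMap.comp Lg) p :=
    (Complex.conjCLE.toContinuousLinearMap.hasFDerivAt).comp p hg
  have h2 : HasFDerivAt (fun p => g p * g p) (w • Lg + w • Lg) p := hg.mul hg
  have h3 : HasFDerivAt (fun p => g p * g p * g p)
      ((w * w) • Lg + w • (w • Lg + w • Lg)) p := h2.mul hg
  have hA : HasFDerivAt (fun p => α * (g p * g p * g p))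
      (α • ((w * w) • Lg + w • (w • Lg + w • Lg))) p := h3.const_mul α
  have hB0 : HasFDerivAt (fun p => g p * g p * starRingEnd ℂ (g p))
      ((w * w) • ((Complex.conjCLE : ℂ ≃L[ℝ] ℂ).toContinuousLinearMap.comp Lg)
        + (starRingEnd ℂ w) • (w • Lg + w • Lg)) p := h2.mul hconj
  have hB : HasFDerivAt (fun p => 3 * β * (g p * g p * starRingEnd ℂ (g p)))
      ((3 * β) • ((w * w) • ((Complex.conjCLE : ℂ ≃L[ℝ] ℂ).toContinuousLinearMap.comp Lg)
        + (starRingEnd ℂ w) • (w • Lg + w • Lg))) p := hB0.const_mul (3 * β)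
  have hF := hA.add hB
  have hC : HasFDerivAt (cubicFormR α β)
      ((1/6 : ℝ) • (Complex.reCLM.comp
        ((α • ((w * w) • Lg + w • (w • Lg + w • Lg))) +
         ((3 * β) • ((w * w) • ((Complex.conjCLE : ℂ ≃L[ℝ] ℂ).toContinuousLinearMap.comp Lg)
        + (starRingEnd ℂ w) • (w • Lg + w • Lg)))))) p := by
    have := (Complex.reCLM.hasFDerivAt.comp p hF).const_mul (1/6 : ℝ)
    refine HasFDerivAt.congr_of_eventuallyEq this (Filter.Eventually.of_forall fun q => ?_)
    simp only [cubicFormR, Function.comp_apply, Complex.reCLM_apply, Pi.add_apply]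
    congr 1
    congr 1
    simp only [hgdef]
    ring
  rw [hC.fderiv]
  have heval : ((1/6 : ℝ) • (Complex.reCLM.comp
        ((α • ((w * w) • Lg + w • (w • Lg + w • Lg))) +
         ((3 * β) • ((w * w) • ((Complex.conjCLE : ℂ ≃L[ℝ] ℂ).toContinuousLinearMap.comp Lg)
        + (starRingEnd ℂ w) • (w • Lg + w • Lg)))))) v
      = (1/6 : ℝ) * ((α • ((w * w) • Lg + w • (w • Lg + w • Lg))) v +
         ((3 * β) • ((w * w) • ((Complex.conjCLE : ℂ ≃L[ℝ] ℂ).toContinuousLinearMap.comp Lg)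
        + (starRingEnd ℂ w) • (w • Lg + w • Lg))) v).re := by
    simp
    ring
  rw [heval]
  congr 1
  show (_ : ℂ).re = (_ : ℂ).re
  congr 1
  simp only [ContinuousLinearMap.smul_apply, ContinuousLinearMap.add_apply,
    ContinuousLinearMap.coe_comp', Function.comp_apply,
    ContinuousLinearEquiv.coe_coe, Complex.conjCLE_apply, smul_eq_mul, ← hw]
  ring

lemma grad_iff (α β : ℂ) (z : ℂ) :
    (pdx (cubicFormR α β) (z.re, z.im) = 0 ∧ pdy (cubicFormR α β) (z.re, z.im) = 0) ↔
      α * z ^ 2 + 2 * (β * (z * starRingEnd ℂ z)) + starRingEnd ℂ (β * z ^ 2) = 0 := by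
  have hx : pdx (cubicFormR α β) (z.re, z.im) =
      (1/2 : ℝ) * ((α * z ^ 2 + 2 * (β * (z * starRingEnd ℂ z)) + β * z ^ 2).re) := by
    simp only [pdx, pd_cubic]
    simp [Lg_apply, Complex.mul_re, Complex.mul_im, Complex.add_re, Complex.add_im, pow_two]
    ring
  have hy : pdy (cubicFormR α β) (z.re, z.im) =
      -(1/2 : ℝ) * ((α * z ^ 2 + 2 * (β * (z * starRingEnd ℂ z)) - β * z ^ 2).im) := by
    simp only [pdy, pd_cubic]
    simp [Lg_apply, Complex.mul_re, Complex.mul_im, Complex.add_re, Complex.add_im, pow_two]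
    ring
  rw [hx, hy]
  set A := α * z ^ 2 + 2 * (β * (z * starRingEnd ℂ z)) with hA
  set B := β * z ^ 2 with hB
  rw [show A + starRingEnd ℂ B = 0 ↔ (A + starRingEnd ℂ B).re = 0 ∧
      (A + starRingEnd ℂ B).im = 0 from Complex.ext_iff.trans (by simp [Complex.ext_iff])]
  simp only [Complex.add_re, Complex.add_im, Complex.sub_re, Complex.sub_im,
    Complex.conj_re, Complex.conj_im]
  constructor
  · rintro ⟨h1, h2⟩
    constructor <;> nlinarith [h1, h2]
  · rintro ⟨h1, h2⟩
    constructor <;> nlinarith [h1, h2]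

/-- The cubic form `c` has a repeated root (a nonzero `z` at which both first partial
derivatives of `c` vanish) if and only if `3β = −2α e^{2iθ} + ᾱ e^{−4iθ}` for some `θ ∈ ℝ`. -/
theorem stmt2 (α β : ℂ) :
    (∃ z : ℂ, z ≠ 0 ∧ pdx (cubicFormR α β) (z.re, z.im) = 0 ∧
        pdy (cubicFormR α β) (z.re, z.im) = 0) ↔
      ∃ θ : ℝ, 3 * β = -2 * α * Complex.exp (2 * Complex.I * (θ : ℂ)) +
        (starRingEnd ℂ α) * Complex.exp (-4 * Complex.I * (θ : ℂ)) := by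
  constructor
  · rintro ⟨z, hz, hxy⟩
    have hQ : α * z ^ 2 + 2 * (β * (z * starRingEnd ℂ z)) + starRingEnd ℂ (β * z ^ 2) = 0 :=
      (grad_iff α β z).mp hxy
    refine ⟨z.arg, ?_⟩
    set θ := z.arg with hθ
    set r : ℝ := ‖z‖ with hr
    set u : ℂ := Complex.exp ((θ : ℂ) * I) with hu
    set cu : ℂ := Complex.exp (-(θ : ℂ) * I) with hcu
    have hzu : (r : ℂ) * u = z := Complex.norm_mul_exp_arg_mul_I z
    have hrne : (r : ℂ) ≠ 0 := by
      simp only [hr, ne_eq, Complex.ofReal_eq_zero, norm_eq_zero]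
      exact hz
    have hucu : u * cu = 1 := by
      rw [hu, hcu, ← Complex.exp_add, show (θ:ℂ)*I + -(θ:ℂ)*I = 0 by ring, Complex.exp_zero]
    have hconju : starRingEnd ℂ u = cu := by
      rw [hu, hcu, ← Complex.exp_conj, map_mul, Complex.conj_ofReal, Complex.conj_I]
      ring_nf
    have hconjcu : starRingEnd ℂ cu = u := by
      rw [hu, hcu, ← Complex.exp_conj, map_mul, map_neg, Complex.conj_ofReal, Complex.conj_I]
      ring_nf
    have hconjz : starRingEnd ℂ z = (r : ℂ) * cu := by
      rw [← hzu, map_mul, hconju, Complex.conj_ofReal]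
    simp only [map_mul, map_pow] at hQ
    rw [hconjz, ← hzu] at hQ
    have hQc := congrArg (starRingEnd ℂ) hQ
    simp only [map_add, map_mul, map_pow, map_zero, map_ofNat, Complex.conj_conj,
      hconju, hconjcu, Complex.conj_ofReal] at hQc
    have E : α * u ^ 2 + 2 * (β * (u * cu)) + starRingEnd ℂ β * cu ^ 2 = 0 := by
      apply mul_left_cancel₀ (pow_ne_zero 2 hrne)
      linear_combination hQ
    have Ec : starRingEnd ℂ α * cu ^ 2 + 2 * (starRingEnd ℂ β * (cu * u)) + β * u ^ 2 = 0 := by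
      apply mul_left_cancel₀ (pow_ne_zero 2 hrne)
      linear_combination hQc
    have e2 : Complex.exp (2 * Complex.I * (θ : ℂ)) = u * u := by
      rw [show 2 * Complex.I * (θ:ℂ) = (θ:ℂ)*I + (θ:ℂ)*I by ring, Complex.exp_add, ← hu]
    have e4 : Complex.exp (-4 * Complex.I * (θ : ℂ)) = cu * cu * (cu * cu) := by
      rw [show -4 * Complex.I * (θ:ℂ) = (-(θ:ℂ)*I + -(θ:ℂ)*I) + (-(θ:ℂ)*I + -(θ:ℂ)*I) by ring,
        Complex.exp_add, Complex.exp_add, ← hcu]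
    rw [e2, e4]
    linear_combination 2*E - cu^2*Ec + (β*(u*cu+1) + 2*(starRingEnd ℂ β)*cu^2 - 4*β)*hucu
  · rintro ⟨θ, hθ⟩
    set u : ℂ := Complex.exp ((θ : ℂ) * I) with hu
    set cu : ℂ := Complex.exp (-(θ : ℂ) * I) with hcu
    have hucu : u * cu = 1 := by
      rw [hu, hcu, ← Complex.exp_add, show (θ:ℂ)*I + -(θ:ℂ)*I = 0 by ring, Complex.exp_zero]
    have hconju : starRingEnd ℂ u = cu := by
      rw [hu, hcu, ← Complex.exp_conj, map_mul, Complex.conj_ofReal, Complex.conj_I]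
      ring_nf
    have hconjcu : starRingEnd ℂ cu = u := by
      rw [hu, hcu, ← Complex.exp_conj, map_mul, map_neg, Complex.conj_ofReal, Complex.conj_I]
      ring_nf
    have e2 : Complex.exp (2 * Complex.I * (θ : ℂ)) = u * u := by
      rw [show 2 * Complex.I * (θ:ℂ) = (θ:ℂ)*I + (θ:ℂ)*I by ring, Complex.exp_add, ← hu]
    have e4 : Complex.exp (-4 * Complex.I * (θ : ℂ)) = cu * cu * (cu * cu) := by
      rw [show -4 * Complex.I * (θ:ℂ) = (-(θ:ℂ)*I + -(θ:ℂ)*I) + (-(θ:ℂ)*I + -(θ:ℂ)*I) by ring,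
        Complex.exp_add, Complex.exp_add, ← hcu]
    rw [e2, e4] at hθ
    have hc : 3 * starRingEnd ℂ β = -2 * starRingEnd ℂ α * (cu * cu) + α * (u * u * (u * u)) := by
      have hh := congrArg (starRingEnd ℂ) hθ
      simp only [map_add, map_mul, map_neg, map_ofNat, Complex.conj_conj, hconju, hconjcu] at hh
      linear_combination hh
    refine ⟨u, Complex.exp_ne_zero _, (grad_iff α β u).mpr ?_⟩
    simp only [map_mul, map_pow, hconju]
    linear_combination (2*(u*cu)/3)*hθ + (cu^2/3)*hc +
      ((α*u^2*(u*cu-3))/3 + 2*(starRingEnd ℂ α)*cu^4/3)*hucu
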